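/- Let A ∈ ℝ^{n×n} be symmetric positive definite, let S ∈ ℝ^{n×n_s} (with n_s ≥ 1) and R ∈ ℝ^{n_c×n} satisfy RS = 0, SᵀS = I_s, RRᵀ = I_c and n_s + n_c = n, and set P⋆ = (I − S(SᵀAS)⁻¹SᵀA)Rᵀ. Then P⋆ minimizes the A-operator norm of the complementary projection among all interpolations compatible with R: ‖I − P⋆R‖_A = 1, and for every P ∈ ℝ^{n×n_c} with RP = I_c one has ‖I − PR‖_A ≥ 1 = ‖I − P⋆R‖_A, where ‖E‖_A = sup_{e≠0} ‖Ee‖_A/‖e‖_A. -/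

import Mathlib

/-!
For every `P`, the map `I - PR` fixes the columns of `S` because `RS = 0`, so its `A`-norm is at
least `1`. Since `[S Rᵀ]` is square with orthonormal columns, `SSᵀ + RᵀR = I`, and this turns
`I - P⋆R` into `S(SᵀAS)⁻¹SᵀA`, the `A`-orthogonal projection onto the range of `S`, whose `A`-norm
is at most `1`. The supremum defining the `A`-norm is finite because the quotient
`‖Ee‖_A / ‖e‖_A` is scale invariant and hence bounded by its maximum on the compact unit sphere.
-/

open Matrix

lemma mulVec_dotProduct_mulVec_mulVec {𝕜 ι κ : Type*} [CommSemiring 𝕜] [Fintype ι] [Fintype κ]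
    (A : Matrix ι ι 𝕜) (M : Matrix ι κ 𝕜) (e : κ → 𝕜) :
    (M *ᵥ e) ⬝ᵥ (A *ᵥ (M *ᵥ e)) = e ⬝ᵥ ((Mᵀ * A * M) *ᵥ e) := by
  rw [mulVec_mulVec, dotProduct_mulVec, dotProduct_mulVec, ← vecMul_transpose,
    vecMul_vecMul, Matrix.mul_assoc]

section EnergyNorm

variable {ι : Type*} [Fintype ι]

/-- `‖e‖_A`. -/
noncomputable def energyNorm (A : Matrix ι ι ℝ) (e : ι → ℝ) : ℝ :=
  √(e ⬝ᵥ (A *ᵥ e))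

/-- The quotients `‖Ee‖_A / ‖e‖_A`, whose supremum is `‖E‖_A`. -/
noncomputable def energyNormRatios (A E : Matrix ι ι ℝ) : Set ℝ :=
  {r | ∃ e : ι → ℝ, e ≠ 0 ∧ r = energyNorm A (E *ᵥ e) / energyNorm A e}

variable {A : Matrix ι ι ℝ}

lemma energyNorm_smul (c : ℝ) (e : ι → ℝ) : energyNorm A (c • e) = |c| * energyNorm A e := by
  rw [energyNorm, energyNorm, mulVec_smul, smul_dotProduct, dotProduct_smul, smul_eq_mul,
    smul_eq_mul, ← mul_assoc, ← sq, Real.sqrt_mul (sq_nonneg c), Real.sqrt_sq_eq_abs]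

lemma continuous_energyNorm : Continuous (energyNorm A) := by
  unfold energyNorm
  fun_prop

lemma energyNorm_pos (hA : A.PosDef) {e : ι → ℝ} (he : e ≠ 0) : 0 < energyNorm A e :=
  Real.sqrt_pos.mpr (by simpa using hA.dotProduct_mulVec_pos he)

lemma bddAbove_energyNormRatios (hA : A.PosDef) (E : Matrix ι ι ℝ) :
    BddAbove (energyNormRatios A E) := by
  set q : (ι → ℝ) → ℝ := fun e => energyNorm A (E *ᵥ e) / energyNorm A e
  have hq_smul (c : ℝ) (hc : c ≠ 0) (e : ι → ℝ) : q (c • e) = q e := by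
    simp only [q, mulVec_smul, energyNorm_smul]
    exact mul_div_mul_left _ _ (abs_ne_zero.mpr hc)
  have hq : ContinuousOn q (Metric.sphere 0 1) := by
    have hnum : Continuous fun e => energyNorm A (E *ᵥ e) :=
      continuous_energyNorm.comp (continuous_const.matrix_mulVec continuous_id)
    exact hnum.continuousOn.div continuous_energyNorm.continuousOn fun e he =>
      (energyNorm_pos hA (ne_zero_of_mem_unit_sphere ⟨e, he⟩)).ne'
  obtain ⟨C, hC⟩ := (isCompact_sphere (0 : ι → ℝ) 1).bddAbove_image hq
  refine ⟨C, ?_⟩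
  rintro _ ⟨e, he, rfl⟩
  calc q e = q (‖e‖⁻¹ • e) := (hq_smul _ (inv_ne_zero (norm_ne_zero_iff.mpr he)) e).symm
    _ ≤ C := hC ⟨_, mem_sphere_zero_iff_norm.mpr (norm_smul_inv_norm (𝕜 := ℝ) he), rfl⟩

lemma one_mem_energyNormRatios (hA : A.PosDef) {E : Matrix ι ι ℝ} {v : ι → ℝ} (hv : v ≠ 0)
    (hEv : E *ᵥ v = v) : 1 ∈ energyNormRatios A E :=
  ⟨v, hv, by rw [hEv, div_self (energyNorm_pos hA hv).ne']⟩

lemma one_le_csSup_energyNormRatios (hA : A.PosDef) {E : Matrix ι ι ℝ} {v : ι → ℝ} (hv : v ≠ 0)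
    (hEv : E *ᵥ v = v) : 1 ≤ sSup (energyNormRatios A E) :=
  le_csSup (bddAbove_energyNormRatios hA E) (one_mem_energyNormRatios hA hv hEv)

lemma csSup_energyNormRatios_eq_one (hA : A.PosDef) {E : Matrix ι ι ℝ} {v : ι → ℝ} (hv : v ≠ 0)
    (hEv : E *ᵥ v = v) (hE : ∀ e, energyNorm A (E *ᵥ e) ≤ energyNorm A e) :
    sSup (energyNormRatios A E) = 1 := by
  refine le_antisymm (csSup_le ⟨1, one_mem_energyNormRatios hA hv hEv⟩ ?_)
    (one_le_csSup_energyNormRatios hA hv hEv)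
  rintro _ ⟨e, he, rfl⟩
  exact div_le_one_of_le₀ (hE e) (energyNorm_pos hA he).le

end EnergyNorm

section Projection

variable {ι κ : Type*} [Fintype ι] [Fintype κ]

lemma energyNorm_mulVec_le [DecidableEq ι] {A P : Matrix ι ι ℝ} (hA : A.PosSemidef)
    (hP : Pᵀ * A * P = Pᵀ * A) (e : ι → ℝ) : energyNorm A (P *ᵥ e) ≤ energyNorm A e := by
  have hAt : Aᵀ = A := isHermitian_iff_isSymm.mp hA.isHermitian
  have hAP : A * P = Pᵀ * A := by
    have h := congrArg transpose hP
    simp only [transpose_mul, transpose_transpose, hAt, Matrix.mul_assoc] at h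
    rw [← h, ← Matrix.mul_assoc, hP]
  have hsplit : A = Pᵀ * A * P + (1 - P)ᵀ * A * (1 - P) := by
    rw [transpose_sub, transpose_one]
    calc A = A + (Pᵀ * A * P - Pᵀ * A) + (Pᵀ * A * P - A * P) := by
          rw [hP, hAP, sub_self, add_zero, add_zero]
      _ = _ := by noncomm_ring
  have hcompl := hA.dotProduct_mulVec_nonneg ((1 - P) *ᵥ e)
  rw [star_trivial, mulVec_dotProduct_mulVec_mulVec] at hcompl
  refine Real.sqrt_le_sqrt ?_
  rw [mulVec_dotProduct_mulVec_mulVec]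
  conv_rhs => rw [hsplit, add_mulVec, dotProduct_add]
  linarith

variable [DecidableEq κ]

/-- The `A`-orthogonal projection onto the column space of `S`. -/
noncomputable def energyProjection (A : Matrix ι ι ℝ) (S : Matrix ι κ ℝ) : Matrix ι ι ℝ :=
  S * (Sᵀ * A * S)⁻¹ * Sᵀ * A

variable {A : Matrix ι ι ℝ} {S : Matrix ι κ ℝ}

lemma isUnit_det_transpose_mul_mul (hA : A.PosDef) (hS : Function.Injective S.mulVec) :
    IsUnit (Sᵀ * A * S).det :=
  (hA.conjTranspose_mul_mul_same hS).det_pos.ne'.isUnit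

lemma energyProjection_mul_self (hA : A.PosDef) (hS : Function.Injective S.mulVec) :
    energyProjection A S * S = S := by
  calc energyProjection A S * S = S * ((Sᵀ * A * S)⁻¹ * (Sᵀ * A * S)) := by
        simp only [energyProjection, Matrix.mul_assoc]
    _ = S := by rw [nonsing_inv_mul _ (isUnit_det_transpose_mul_mul hA hS), Matrix.mul_one]

lemma transpose_energyProjection_mul_mul (hA : A.PosDef) (hS : Function.Injective S.mulVec) :
    (energyProjection A S)ᵀ * A * energyProjection A S = (energyProjection A S)ᵀ * A := by
  set Q := (Sᵀ * A * S)⁻¹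
  have hAt : Aᵀ = A := isHermitian_iff_isSymm.mp hA.isHermitian
  have hQt : Qᵀ = Q := by
    simp only [Q, transpose_nonsing_inv, transpose_mul, transpose_transpose, hAt, Matrix.mul_assoc]
  have hPt : (energyProjection A S)ᵀ = A * S * Q * Sᵀ := by
    rw [energyProjection]
    simp only [transpose_mul, transpose_transpose, hAt]
    rw [hQt]
    simp only [Matrix.mul_assoc]
  have hSAP : Sᵀ * A * energyProjection A S = Sᵀ * A := by
    calc Sᵀ * A * energyProjection A S = (Sᵀ * A * S) * Q * (Sᵀ * A) := by
          simp only [energyProjection, Q, Matrix.mul_assoc]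
      _ = Sᵀ * A := by rw [mul_nonsing_inv _ (isUnit_det_transpose_mul_mul hA hS), Matrix.one_mul]
  calc (energyProjection A S)ᵀ * A * energyProjection A S
      = A * S * Q * (Sᵀ * A * energyProjection A S) := by simp only [hPt, Matrix.mul_assoc]
    _ = (energyProjection A S)ᵀ * A := by rw [hSAP, hPt]; simp only [Matrix.mul_assoc]

end Projection

section Complement

variable {𝕜 ι κ μ : Type*} [CommRing 𝕜] [Fintype ι] [Fintype κ] [Fintype μ] [DecidableEq ι]

lemma mul_transpose_add_transpose_mul_eq_one [DecidableEq κ] [DecidableEq μ] (e : ι ≃ κ ⊕ μ)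
    {S : Matrix ι κ 𝕜} {R : Matrix μ ι 𝕜} (hRS : R * S = 0) (hS : Sᵀ * S = 1)
    (hR : R * Rᵀ = 1) : S * Sᵀ + Rᵀ * R = 1 := by
  have hSR : Sᵀ * Rᵀ = 0 := by rw [← transpose_mul, hRS, transpose_zero]
  have h : fromRows Sᵀ R * fromCols S Rᵀ = 1 := by
    rw [fromRows_mul_fromCols, hS, hR, hRS, hSR, fromBlocks_one]
  rwa [← fromCols_mul_fromRows_eq_one_comm e, fromCols_mul_fromRows] at h

lemma one_sub_one_sub_mul_transpose_mul_eq {S : Matrix ι κ 𝕜} {R : Matrix μ ι 𝕜}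
    {X : Matrix ι ι 𝕜} (hSR : S * Sᵀ + Rᵀ * R = 1) (hX : X * S = S) :
    1 - (1 - X) * Rᵀ * R = X := by
  calc 1 - (1 - X) * Rᵀ * R = 1 - (1 - X) * (1 - S * Sᵀ) := by
        rw [Matrix.mul_assoc, ← hSR, add_sub_cancel_left]
    _ = X - (X * S - S) * Sᵀ := by
        simp only [Matrix.sub_mul, Matrix.mul_sub, Matrix.one_mul, Matrix.mul_one,
          Matrix.mul_assoc]
        abel
    _ = X := by rw [hX, sub_self, Matrix.zero_mul, sub_zero]

end Complement

/-- The ideal interpolation minimizes the `A`-operator norm of the complementary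
projection among all interpolations compatible with `R`: `‖I − P⋆R‖_A = 1`, and for
every `P` with `RP = I`, `‖I − PR‖_A ≥ 1 = ‖I − P⋆R‖_A`. -/
theorem ideal_interpolation_minimizes_complementary_projection_norm {n ns nc : ℕ}
    (A : Matrix (Fin n) (Fin n) ℝ) (hA : A.PosDef)
    (S : Matrix (Fin n) (Fin ns) ℝ) (R : Matrix (Fin nc) (Fin n) ℝ)
    (hRS : R * S = 0) (hS : Sᵀ * S = 1) (hR : R * Rᵀ = 1)
    (hdim : ns + nc = n) (hns : 1 ≤ ns)
    (Pstar : Matrix (Fin n) (Fin nc) ℝ)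
    (hPstar : Pstar = (1 - S * (Sᵀ * A * S)⁻¹ * Sᵀ * A) * Rᵀ)
    (opNormA : Matrix (Fin n) (Fin n) ℝ → ℝ)
    (hopNormA : ∀ E : Matrix (Fin n) (Fin n) ℝ,
      opNormA E = sSup {r : ℝ | ∃ e : Fin n → ℝ, e ≠ 0 ∧
        r = Real.sqrt ((E *ᵥ e) ⬝ᵥ (A *ᵥ (E *ᵥ e))) / Real.sqrt (e ⬝ᵥ (A *ᵥ e))}) :
    opNormA (1 - Pstar * R) = 1 ∧
    ∀ P : Matrix (Fin n) (Fin nc) ℝ, R * P = 1 →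
      opNormA (1 - Pstar * R) ≤ opNormA (1 - P * R) := by
  have hSinj : Function.Injective S.mulVec := fun x y hxy => by
    simpa [mulVec_mulVec, hS] using congrArg (Sᵀ *ᵥ ·) hxy
  set v := S *ᵥ Pi.single ⟨0, hns⟩ 1
  have hv : v ≠ 0 := hSinj.ne (by simp) |>.trans_eq (mulVec_zero S)
  have hfix (P : Matrix (Fin n) (Fin nc) ℝ) : (1 - P * R) *ᵥ v = v := by
    rw [mulVec_mulVec, Matrix.sub_mul, Matrix.one_mul, Matrix.mul_assoc, hRS, Matrix.mul_zero,
      sub_zero]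
  have hstar : 1 - Pstar * R = energyProjection A S := by
    subst hPstar
    exact one_sub_one_sub_mul_transpose_mul_eq
      (mul_transpose_add_transpose_mul_eq_one ((finCongr hdim.symm).trans finSumFinEquiv.symm)
        hRS hS hR)
      (energyProjection_mul_self hA hSinj)
  have hnorm : opNormA (1 - Pstar * R) = 1 :=
    (hopNormA _).trans <| csSup_energyNormRatios_eq_one hA hv (hfix Pstar) fun e => hstar ▸
      energyNorm_mulVec_le hA.posSemidef (transpose_energyProjection_mul_mul hA hSinj) e
  refine ⟨hnorm, fun P _ => ?_⟩
  rw [hnorm, hopNormA]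
  exact one_le_csSup_energyNormRatios hA hv (hfix P)
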